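/- Let B be a polynomial factor of F_p^n of degree d and complexity C, let f : F_p^n → {0,1} be decomposed as f = E[f|B] + f_2 + f_3 with f_2, f_3 : F_p^n → [-1,1], and let B' be a polynomial factor of degree d and complexity C' whose partition refines that of B. Then ‖E[f|B] − E[f|B']‖_1 ≤ ‖f_2‖_2 + p^{dC'}‖f_3‖_{U^{d+1}}. -/

import Mathlib

open Finset

/-- Non-classical polynomial of degree ≤ d: all `(d+1)`-fold additive derivatives vanish. -/
def IsPolyDegLE {V : Type*} [AddCommGroup V] (P : V → AddCircle (1 : ℝ)) (d : ℕ) : Prop :=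
  ∀ (y : Fin (d + 1) → V) (x : V),
    ∑ I : Finset (Fin (d + 1)),
      ((-1 : ℤ) ^ (d + 1 - I.card)) • P (x + ∑ i ∈ I, y i) = 0

/-- Gowers average of order `d` of a real-valued function. -/
noncomputable def gowersAvg {V : Type*} [AddCommGroup V] [Fintype V]
    (f : V → ℝ) (d : ℕ) : ℝ :=
  (∑ x : V, ∑ y : Fin d → V, ∏ I : Finset (Fin d), f (x + ∑ i ∈ I, y i)) /
    ((Fintype.card V : ℝ) ^ (d + 1))

/-- Gowers norm of order `d` of a real-valued function. -/
noncomputable def gowersNorm {V : Type*} [AddCommGroup V] [Fintype V]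
    (f : V → ℝ) (d : ℕ) : ℝ :=
  |gowersAvg f d| ^ ((1 : ℝ) / 2 ^ d)

open scoped Classical in
/-- Conditional expectation over the fibers of `B`. -/
noncomputable def condExp {X α : Type*} [Fintype X] (B : X → α) (f : X → ℝ) (x : X) : ℝ :=
  (∑ y ∈ Finset.univ.filter (fun y => B y = B x), f y) /
    ((Finset.univ.filter (fun y => B y = B x)).card : ℝ)

/-- `L¹` average. -/
noncomputable def l1Avg {X : Type*} [Fintype X] (f : X → ℝ) : ℝ :=
  (∑ x : X, |f x|) / (Fintype.card X : ℝ)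

/-- `L²` average norm. -/
noncomputable def l2Avg {X : Type*} [Fintype X] (f : X → ℝ) : ℝ :=
  Real.sqrt ((∑ x : X, (f x) ^ 2) / (Fintype.card X : ℝ))


/-!
Since `B'` refines `B`, conditioning `E[f|B]` on `B'` does nothing, so
`E[f|B'] - E[f|B] = E[f₂|B'] + E[f₃|B']`. Conditional expectation contracts `L¹`, and
`‖·‖₁ ≤ ‖·‖₂`, which handles `f₂`. For `f₃`: a polynomial of degree `≤ d` on `F_p^n` takes values
in a coset of the `p^d`-torsion of `ℝ/ℤ`, so `B'` has at most `p^{dC'}` atoms and the indicator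
of each atom is an average of `p^{dC'}` phases `e(∑ κᵢ Qᵢ)` of degree `≤ d`. The correlation of
`f₃` with such a phase is at most `‖f₃‖_{U^{d+1}}`, by `d + 1` applications of van der Corput.
-/

namespace Fin

@[to_additive]
theorem prod_finset_succ {M : Type*} [CommMonoid M] (k : ℕ) (φ : Finset (Fin (k + 1)) → M) :
    ∏ I, φ I = ∏ J : Finset (Fin k), φ (J.map (succEmb k)) * φ (insert 0 (J.map (succEmb k))) := by
  classical
  have h0 : (0 : Fin (k + 1)) ∉ (univ : Finset (Fin k)).map (succEmb k) := by simp
  have huniv : (univ : Finset (Fin (k + 1))) =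
      insert 0 ((univ : Finset (Fin k)).map (succEmb k)) := by
    simp only [univ_succ, cons_eq_insert]; rfl
  rw [← powerset_univ, huniv, prod_powerset_insert h0, prod_mul_distrib]
  simp only [map_eq_image, powerset_image]
  rw [prod_image, prod_image, powerset_univ]
  all_goals exact fun s _ t _ h => (map_injective (succEmb k)) (by simpa [map_eq_image] using h)

end Fin

section Polynomial

variable {V : Type*} [AddCommGroup V] {P : V → AddCircle (1 : ℝ)} {d : ℕ}

theorem IsPolyDegLE.sum_nsmul {ι : Type*} (s : Finset ι) {Q : ι → V → AddCircle (1 : ℝ)}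
    (hQ : ∀ i ∈ s, IsPolyDegLE (Q i) d) (m : ι → ℕ) :
    IsPolyDegLE (fun x => ∑ i ∈ s, m i • Q i x) d := by
  intro y x
  simp_rw [smul_sum, smul_comm _ (m _)]
  rw [sum_comm]
  exact sum_eq_zero fun i hi => by rw [← smul_sum, hQ i hi y x, smul_zero]

theorem IsPolyDegLE.comp_add_sub (hP : IsPolyDegLE P (d + 1)) (t : V) :
    IsPolyDegLE (fun x => P (x + t) - P x) d := by
  intro y x
  have H := hP (Fin.cons t y) x
  rw [Fin.sum_finset_succ] at H
  rw [← H]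
  refine sum_congr rfl fun J _ => ?_
  have hJ : J.card ≤ d + 1 := by simpa using card_le_univ J
  have h0 : (0 : Fin (d + 2)) ∉ J.map (Fin.succEmb (d + 1)) := by simp
  simp only [sum_insert h0, card_insert_of_notMem h0, sum_map, card_map, Fin.coe_succEmb,
    Fin.cons_succ, Fin.cons_zero, Nat.add_sub_add_right]
  rw [show d + 1 + 1 - #J = d + 1 - #J + 1 by omega, pow_succ, add_left_comm x t,
    add_comm t]
  module

theorem IsPolyDegLE.apply_eq_apply_zero (hP : IsPolyDegLE P 0) (x : V) : P x = P 0 := by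
  simpa [Fin.sum_finset_succ, Subsingleton.elim default (∅ : Finset (Fin 0)), neg_add_eq_zero,
    eq_comm] using hP (fun _ => x) 0

theorem IsPolyDegLE.pow_nsmul_sub_eq_zero {p : ℕ} (hV : ∀ v : V, p • v = 0) :
    ∀ {d : ℕ} {P : V → AddCircle (1 : ℝ)}, IsPolyDegLE P d → ∀ x, p ^ d • (P x - P 0) = 0
  | 0, P, hP, x => by
    rw [hP.apply_eq_apply_zero, sub_self, smul_zero]
  | d + 1, P, hP, x => by
    have hderiv : ∀ s t : V, p ^ d • (P (s + t) - P s) = p ^ d • (P t - P 0) := fun s t => by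
      have := pow_nsmul_sub_eq_zero hV (hP.comp_add_sub t) s
      rwa [zero_add, smul_sub, sub_eq_zero] at this
    -- the degree drop makes `t ↦ p ^ d • (P t - P 0)` a homomorphism, which `p` kills
    let c : V →+ AddCircle (1 : ℝ) := AddMonoidHom.mk' (fun t => p ^ d • (P t - P 0)) fun s t => by
      rw [← sub_add_sub_cancel (P (s + t)) (P s), smul_add, hderiv, add_comm]
    rw [pow_succ', mul_smul]
    exact (map_nsmul c p x).symm.trans (by simp [c, hV x])

end Polynomial

theorem AddChar.map_sum_eq_prod {A R ι : Type*} [AddCommMonoid A] [CommMonoid R] (ψ : AddChar A R)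
    (s : Finset ι) (f : ι → A) : ψ (∑ i ∈ s, f i) = ∏ i ∈ s, ψ (f i) := by
  induction s using Finset.cons_induction with
  | empty => simp
  | cons a s ha ih => rw [sum_cons, prod_cons, AddChar.map_add_eq_mul, ih]

section Character

open ComplexConjugate

noncomputable def circleChar : AddChar (AddCircle (1 : ℝ)) ℂ :=
  Circle.coeHom.compAddChar AddCircle.toCircle_addChar

theorem circleChar_apply (t : AddCircle (1 : ℝ)) : circleChar t = AddCircle.toCircle t := rfl

theorem norm_circleChar (t : AddCircle (1 : ℝ)) : ‖circleChar t‖ = 1 := Circle.norm_coe _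

theorem circleChar_injective : Function.Injective circleChar := fun _ _ h =>
  AddCircle.injective_toCircle one_ne_zero (Circle.coe_injective h)

theorem conj_circleChar (t : AddCircle (1 : ℝ)) : conj (circleChar t) = circleChar (-t) := by
  rw [AddChar.map_neg_eq_inv, circleChar_apply, ← Circle.coe_inv_eq_conj, ← Circle.coe_inv]

theorem sum_range_circleChar_nsmul {M : ℕ} {s : AddCircle (1 : ℝ)} (hs : M • s = 0) :
    ∑ k ∈ range M, circleChar (k • s) = if s = 0 then (M : ℂ) else 0 := by
  split_ifs with h
  · simp [h]
  · have hne : circleChar s ≠ 1 := fun h1 =>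
      h (circleChar_injective (h1.trans (AddChar.map_zero_eq_one _).symm))
    simp_rw [AddChar.map_nsmul_eq_pow]
    rw [geom_sum_eq hne, ← AddChar.map_nsmul_eq_pow, hs, AddChar.map_zero_eq_one, sub_self,
      zero_div]

end Character

section Gowers

open ComplexConjugate

variable {V : Type*} [AddCommGroup V] [Fintype V]

theorem gowersAvg_zero (f : V → ℝ) : gowersAvg f 0 = (∑ x, f x) / Fintype.card V := by
  simp [gowersAvg, Subsingleton.elim default (∅ : Finset (Fin 0))]

theorem gowersAvg_succ (f : V → ℝ) (k : ℕ) :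
    gowersAvg f (k + 1) = (∑ t, gowersAvg (fun x => f x * f (x + t)) k) / Fintype.card V := by
  simp only [gowersAvg, ← sum_div, div_div, ← pow_succ]
  congr 1
  refine Eq.trans ?_ Finset.sum_comm
  refine sum_congr rfl fun x _ => ?_
  rw [← (Fin.consEquiv fun _ => V).sum_comp, Fintype.sum_prod_type]
  refine sum_congr rfl fun t _ => sum_congr rfl fun y _ => ?_
  rw [Fin.prod_finset_succ]
  refine prod_congr rfl fun J _ => ?_
  simp [Fin.consEquiv, sum_map, sum_insert, add_assoc, add_comm t]

theorem gowersAvg_one (f : V → ℝ) : gowersAvg f 1 = ((∑ x, f x) / Fintype.card V) ^ 2 := by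
  rw [gowersAvg_succ, div_pow, sq, sq (Fintype.card V : ℝ), sum_mul_sum]
  simp only [gowersAvg_zero, ← sum_div, div_div]
  congr 1
  rw [sum_comm]
  exact sum_congr rfl fun x _ => Fintype.sum_equiv (Equiv.addLeft x) _ _ fun _ => rfl

theorem sq_norm_sum_le_sum_norm_sum_conj_mul (g : V → ℂ) :
    ‖∑ x, g x‖ ^ 2 ≤ ∑ t, ‖∑ x, conj (g x) * g (x + t)‖ := by
  have hsq : ((‖∑ x, g x‖ ^ 2 : ℝ) : ℂ) = ∑ t, ∑ x, conj (g x) * g (x + t) := by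
    rw [Complex.ofReal_pow, ← Complex.conj_mul', map_sum, sum_mul_sum]
    conv_rhs => rw [Finset.sum_comm]
    exact sum_congr rfl fun x _ => (Fintype.sum_equiv (Equiv.addLeft x) _ _ fun _ => rfl).symm
  calc ‖∑ x, g x‖ ^ 2 = ‖((‖∑ x, g x‖ ^ 2 : ℝ) : ℂ)‖ := by
        rw [Complex.norm_real, Real.norm_of_nonneg (by positivity)]
    _ ≤ _ := hsq ▸ norm_sum_le _ _

theorem pow_sum_div_card_le_sum_pow_div {ι : Type*} [Fintype ι] {a : ι → ℝ} (ha : ∀ i, 0 ≤ a i)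
    {m : ℕ} (hm : m ≠ 0) :
    ((∑ i, a i) / Fintype.card ι) ^ m ≤ (∑ i, a i ^ m) / Fintype.card ι := by
  obtain ⟨n, rfl⟩ := Nat.exists_eq_succ_of_ne_zero hm
  rw [div_pow, pow_succ (Fintype.card ι : ℝ) n, ← div_div]
  gcongr
  simpa using pow_sum_div_card_le_sum_pow (s := univ) (fun i _ => ha i) n

/-- Van der Corput replaces `f` by `x ↦ f x * f (x + t)` and the phase by its derivative in
direction `t`, lowering the degree by one. -/
theorem pow_norm_sum_mul_circleChar_le_gowersAvg :
    ∀ {d : ℕ} (f : V → ℝ) {R : V → AddCircle (1 : ℝ)}, IsPolyDegLE R d →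
      (‖∑ x, (f x : ℂ) * circleChar (R x)‖ / Fintype.card V) ^ 2 ^ (d + 1) ≤ gowersAvg f (d + 1)
  | 0, f, R, hR => by
    have hnorm : ‖∑ x, (f x : ℂ) * circleChar (R x)‖ = |∑ x, f x| := by
      simp only [hR.apply_eq_apply_zero, ← sum_mul, norm_mul, norm_circleChar, mul_one,
        ← Complex.ofReal_sum, Complex.norm_real, Real.norm_eq_abs]
    rw [hnorm, gowersAvg_one, zero_add, pow_one, div_pow, div_pow, sq_abs]
  | d + 1, f, R, hR => by
    set N : ℝ := (Fintype.card V : ℝ)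
    have hN : 0 < N := Nat.cast_pos.2 Fintype.card_pos
    set a : V → ℝ := fun t =>
      ‖∑ x, ((f x * f (x + t) : ℝ) : ℂ) * circleChar (R (x + t) - R x)‖ / N
    have hvdc : (‖∑ x, (f x : ℂ) * circleChar (R x)‖ / N) ^ 2 ≤ (∑ t, a t) / N := by
      have h := sq_norm_sum_le_sum_norm_sum_conj_mul fun x => (f x : ℂ) * circleChar (R x)
      simp only [map_mul, Complex.conj_ofReal, conj_circleChar] at h
      rw [div_pow, sq N, ← div_div, ← sum_div]
      gcongr
      refine h.trans_eq (sum_congr rfl fun t _ => ?_)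
      congr 2 with x
      rw [sub_eq_add_neg, AddChar.map_add_eq_mul]
      push_cast
      ring
    calc (‖∑ x, (f x : ℂ) * circleChar (R x)‖ / N) ^ 2 ^ (d + 1 + 1)
        = ((‖∑ x, (f x : ℂ) * circleChar (R x)‖ / N) ^ 2) ^ 2 ^ (d + 1) := by
          rw [← pow_mul, ← pow_succ']
      _ ≤ ((∑ t, a t) / N) ^ 2 ^ (d + 1) := by gcongr
      _ ≤ (∑ t, a t ^ 2 ^ (d + 1)) / N :=
          pow_sum_div_card_le_sum_pow_div (fun t => by positivity) (by positivity)
      _ ≤ (∑ t, gowersAvg (fun x => f x * f (x + t)) (d + 1)) / N := by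
          gcongr with t
          exact pow_norm_sum_mul_circleChar_le_gowersAvg _ (hR.comp_add_sub t)
      _ = gowersAvg f (d + 1 + 1) := (gowersAvg_succ f (d + 1)).symm

theorem norm_sum_mul_circleChar_le {d : ℕ} (f : V → ℝ) {R : V → AddCircle (1 : ℝ)}
    (hR : IsPolyDegLE R d) :
    ‖∑ x, (f x : ℂ) * circleChar (R x)‖ ≤ Fintype.card V * gowersNorm f (d + 1) := by
  have hN : (0 : ℝ) < Fintype.card V := Nat.cast_pos.2 Fintype.card_pos
  rw [← div_le_iff₀' hN]
  have hm : 2 ^ (d + 1) ≠ 0 := by positivity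
  calc ‖∑ x, (f x : ℂ) * circleChar (R x)‖ / Fintype.card V
      = ((‖∑ x, (f x : ℂ) * circleChar (R x)‖ / Fintype.card V) ^ 2 ^ (d + 1)) ^
          ((2 ^ (d + 1) : ℕ) : ℝ)⁻¹ := (Real.pow_rpow_inv_natCast (by positivity) hm).symm
    _ ≤ |gowersAvg f (d + 1)| ^ ((2 ^ (d + 1) : ℕ) : ℝ)⁻¹ := by
        gcongr
        exact (pow_norm_sum_mul_circleChar_le_gowersAvg f hR).trans (le_abs_self _)
    _ = gowersNorm f (d + 1) := by rw [gowersNorm, one_div]; push_cast; rfl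

end Gowers

section CondExp

open scoped Classical

variable {X α : Type*} [Fintype X] (B : X → α)

theorem condExp_add (g h : X → ℝ) : condExp B (g + h) = condExp B g + condExp B h := by
  ext x
  simp only [condExp, Pi.add_apply, sum_add_distrib, add_div]

theorem condExp_eq_of_eq (g : X → ℝ) {x y : X} (h : B x = B y) : condExp B g x = condExp B g y := by
  rw [condExp, condExp, h]

theorem condExp_eq_self {g : X → ℝ} (hg : ∀ x y, B x = B y → g x = g y) : condExp B g = g := by
  ext x
  have hx : x ∈ univ.filter fun y => B y = B x := by simp
  rw [condExp, sum_congr rfl fun y hy => hg y x (mem_filter.1 hy).2, sum_const, nsmul_eq_mul,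
    mul_div_cancel_left₀ _ (Nat.cast_ne_zero.2 (card_ne_zero_of_mem hx))]

theorem condExp_condExp_of_refines {β : Type*} {B' : X → β} (hB : ∀ x y, B' x = B' y → B x = B y)
    (g : X → ℝ) : condExp B' (condExp B g) = condExp B g :=
  condExp_eq_self B' fun x y h => condExp_eq_of_eq B g (hB x y h)

theorem condExp_apply [DecidableEq α] (g : X → ℝ) (x : X) :
    condExp B g x = (∑ y ∈ univ.filter fun y => B y = B x, g y) /
      (univ.filter fun y => B y = B x).card := by
  rw [condExp, filter_congr_decidable]

theorem sum_abs_condExp [DecidableEq α] (g : X → ℝ) :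
    ∑ x, |condExp B g x| = ∑ b ∈ univ.image B, |∑ y ∈ univ.filter fun y => B y = b, g y| := by
  rw [← sum_fiberwise_of_maps_to fun x _ => mem_image_of_mem B (mem_univ x)]
  refine sum_congr rfl fun b hb => ?_
  obtain ⟨x₀, -, rfl⟩ := mem_image.1 hb
  have hx₀ : x₀ ∈ univ.filter fun y => B y = B x₀ := by simp
  rw [sum_congr rfl fun x hx => by rw [condExp_eq_of_eq B g (mem_filter.1 hx).2], sum_const,
    condExp_apply, abs_div, Nat.abs_cast, nsmul_eq_mul, mul_div_cancel₀ _
      (Nat.cast_ne_zero.2 (card_ne_zero_of_mem hx₀))]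

theorem l1Avg_condExp_le (g : X → ℝ) : l1Avg (condExp B g) ≤ l1Avg g := by
  unfold l1Avg
  gcongr ?_ / _
  rw [sum_abs_condExp, ← sum_fiberwise_of_maps_to fun x _ => mem_image_of_mem B (mem_univ x)]
  exact sum_le_sum fun b _ => abs_sum_le_sum_abs _ _

end CondExp

section Averages

variable {X : Type*} [Fintype X]

theorem l1Avg_add_le (g h : X → ℝ) : l1Avg (g + h) ≤ l1Avg g + l1Avg h := by
  unfold l1Avg
  rw [← add_div, ← sum_add_distrib]
  gcongr with x
  exact abs_add_le _ _

theorem l1Avg_neg (g : X → ℝ) : l1Avg (-g) = l1Avg g := by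
  simp [l1Avg]

theorem l1Avg_le_l2Avg (g : X → ℝ) : l1Avg g ≤ l2Avg g := by
  refine Real.le_sqrt_of_sq_le ?_
  simpa [l1Avg] using sum_div_card_sq_le_sum_sq_div_card (s := univ) (f := fun x => |g x|)

end Averages

theorem AddCircle.card_le_of_nsmul_sub_eq_zero {M : ℕ} (hM : 0 < M) {s : Finset (AddCircle (1 : ℝ))}
    (a : AddCircle (1 : ℝ)) (hs : ∀ t ∈ s, M • (t - a) = 0) : s.card ≤ M := by
  have htorsion := AddCircle.card_torsion_le_of_isSMulRegular (1 : ℝ) M hM.ne'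
    (.of_right_eq_zero_of_smul fun _ ↦ by simp [hM.ne'])
  have hsub : ((s.image (· - a) : Finset (AddCircle (1 : ℝ))) : Set (AddCircle (1 : ℝ))) ⊆
      {x | M • x = 0} := by
    simpa [Set.subset_def] using hs
  have h := (Set.encard_le_encard hsub).trans htorsion
  rwa [Set.encard_coe_eq_coe_finsetCard, card_image_of_injective _ (sub_left_injective),
    Nat.cast_le] at h

section PolynomialFactor

open scoped Classical

variable {V ι : Type*} [Fintype ι] {M d : ℕ} {Q : ι → V → AddCircle (1 : ℝ)}

/-- Each `Q i` takes values in a coset of the `M`-torsion, where `1_{s = 0}` is the average of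
`e(k s)` over `k < M`. -/
theorem ite_fiber_eq_sum_circleChar (hM : 0 < M) (hQ : ∀ i x y, M • (Q i x - Q i y) = 0)
    (x₀ y : V) :
    (if (fun i => Q i y) = (fun i => Q i x₀) then 1 else 0 : ℂ) =
      (M : ℂ)⁻¹ ^ Fintype.card ι * ∑ κ ∈ Fintype.piFinset fun _ => range M,
        circleChar (-∑ i, κ i • Q i x₀) * circleChar (∑ i, κ i • Q i y) := by
  have hcoord : ∀ i, (if Q i y = Q i x₀ then 1 else 0 : ℂ) =
      (M : ℂ)⁻¹ * ∑ k ∈ range M, circleChar (k • (Q i y - Q i x₀)) := fun i => by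
    rw [sum_range_circleChar_nsmul (hQ i y x₀)]
    simp only [sub_eq_zero]
    split_ifs
    · exact (inv_mul_cancel₀ (Nat.cast_ne_zero.2 hM.ne')).symm
    · rw [mul_zero]
  have hprod : (if (fun i => Q i y) = (fun i => Q i x₀) then 1 else 0 : ℂ) =
      ∏ i, if Q i y = Q i x₀ then 1 else 0 := by
    simp [Fintype.prod_boole, funext_iff]
  rw [hprod, prod_congr rfl fun i _ => hcoord i, prod_mul_distrib, prod_const, card_univ,
    prod_univ_sum]
  congr 1
  refine sum_congr rfl fun κ _ => ?_
  rw [← AddChar.map_add_eq_mul, ← AddChar.map_sum_eq_prod]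
  congr 1
  simp only [smul_sub, sum_sub_distrib]
  abel

variable [AddCommGroup V] [Fintype V]

theorem abs_sum_fiber_le (hM : 0 < M) (hdeg : ∀ i, IsPolyDegLE (Q i) d)
    (hQ : ∀ i x y, M • (Q i x - Q i y) = 0) (f : V → ℝ) (x₀ : V) :
    |∑ y ∈ univ.filter fun y => (fun i => Q i y) = fun i => Q i x₀, f y| ≤
      Fintype.card V * gowersNorm f (d + 1) := by
  set K := Fintype.piFinset fun _ : ι => range M
  set W : (ι → ℕ) → ℂ := fun κ => ∑ y, (f y : ℂ) * circleChar (∑ i, κ i • Q i y)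
  have hexpand : ((∑ y ∈ univ.filter fun y => (fun i => Q i y) = fun i => Q i x₀, f y : ℝ) : ℂ) =
      (M : ℂ)⁻¹ ^ Fintype.card ι * ∑ κ ∈ K, circleChar (-∑ i, κ i • Q i x₀) * W κ := by
    rw [Complex.ofReal_sum, sum_filter, sum_congr rfl fun y _ => by rw [← mul_boole]]
    simp_rw [ite_fiber_eq_sum_circleChar hM hQ x₀, mul_sum, W, mul_sum]
    rw [Finset.sum_comm]
    exact sum_congr rfl fun κ _ => sum_congr rfl fun y _ => by ring
  have hK : (K.card : ℝ) = (M : ℝ) ^ Fintype.card ι := by simp [K, Fintype.card_piFinset]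
  rw [← Real.norm_eq_abs, ← Complex.norm_real, hexpand, norm_mul, norm_pow, norm_inv,
    Complex.norm_natCast]
  calc ((M : ℝ)⁻¹ ^ Fintype.card ι) * ‖∑ κ ∈ K, circleChar (-∑ i, κ i • Q i x₀) * W κ‖
      ≤ (M : ℝ)⁻¹ ^ Fintype.card ι * ∑ κ ∈ K, Fintype.card V * gowersNorm f (d + 1) := by
        gcongr
        refine (norm_sum_le _ _).trans (sum_le_sum fun κ _ => ?_)
        rw [norm_mul, norm_circleChar, one_mul]
        exact norm_sum_mul_circleChar_le f (IsPolyDegLE.sum_nsmul univ (fun i _ => hdeg i) κ)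
    _ = Fintype.card V * gowersNorm f (d + 1) := by
        rw [sum_const, nsmul_eq_mul, hK, ← mul_assoc, ← mul_pow,
          inv_mul_cancel₀ (Nat.cast_ne_zero.2 hM.ne'), one_pow, one_mul]

theorem card_image_le_pow (hM : 0 < M) (hQ : ∀ i x y, M • (Q i x - Q i y) = 0) :
    (univ.image fun x i => Q i x).card ≤ M ^ Fintype.card ι := by
  calc (univ.image fun x i => Q i x).card
      ≤ (Fintype.piFinset fun i => univ.image (Q i)).card :=
        card_le_card fun b hb => by
          obtain ⟨x, -, rfl⟩ := mem_image.1 hb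
          simp [Fintype.mem_piFinset]
    _ = ∏ i, (univ.image (Q i)).card := Fintype.card_piFinset _
    _ ≤ ∏ _i : ι, M := prod_le_prod' fun i _ =>
        AddCircle.card_le_of_nsmul_sub_eq_zero hM (Q i 0) fun t ht => by
          obtain ⟨x, -, rfl⟩ := mem_image.1 ht
          exact hQ i x 0
    _ = M ^ Fintype.card ι := by simp

theorem l1Avg_condExp_le_pow_mul_gowersNorm (hM : 0 < M) (hdeg : ∀ i, IsPolyDegLE (Q i) d)
    (hQ : ∀ i x y, M • (Q i x - Q i y) = 0) (f : V → ℝ) :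
    l1Avg (condExp (fun x i => Q i x) f) ≤ (M : ℝ) ^ Fintype.card ι * gowersNorm f (d + 1) := by
  have hN : (0 : ℝ) < Fintype.card V := Nat.cast_pos.2 Fintype.card_pos
  have hγ : 0 ≤ gowersNorm f (d + 1) := Real.rpow_nonneg (abs_nonneg _) _
  rw [l1Avg, sum_abs_condExp, div_le_iff₀ hN]
  refine (sum_le_sum (g := fun _ => Fintype.card V * gowersNorm f (d + 1)) fun b hb => ?_).trans ?_
  · obtain ⟨x₀, -, rfl⟩ := mem_image.1 hb
    exact abs_sum_fiber_le hM hdeg hQ f x₀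
  rw [sum_const, nsmul_eq_mul, mul_comm _ (Fintype.card V : ℝ), mul_left_comm]
  gcongr
  exact_mod_cast card_image_le_pow hM hQ

theorem l1Avg_condExp_le_of_nsmul_eq_zero {p : ℕ} (hp : 0 < p) (hV : ∀ v : V, p • v = 0)
    (hdeg : ∀ i, IsPolyDegLE (Q i) d) (f : V → ℝ) :
    l1Avg (condExp (fun x i => Q i x) f) ≤
      (p : ℝ) ^ (d * Fintype.card ι) * gowersNorm f (d + 1) := by
  have hQ : ∀ i x y, p ^ d • (Q i x - Q i y) = 0 := fun i x y => by
    rw [← sub_sub_sub_cancel_right _ _ (Q i 0), smul_sub, (hdeg i).pow_nsmul_sub_eq_zero hV,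
      (hdeg i).pow_nsmul_sub_eq_zero hV, sub_zero]
  simpa [pow_mul] using l1Avg_condExp_le_pow_mul_gowersNorm (pow_pos hp d) hdeg hQ f

end PolynomialFactor

theorem condExp_refinement_bound_general {p n : ℕ} [Fact p.Prime] (d C C' : ℕ)
    (P : Fin C → (Fin n → ZMod p) → AddCircle (1 : ℝ))
    (Q : Fin C' → (Fin n → ZMod p) → AddCircle (1 : ℝ))
    (hdegQ : ∀ i, IsPolyDegLE (Q i) d)
    (hrefine : ∀ x y : Fin n → ZMod p,
      (fun i => Q i x) = (fun i => Q i y) → (fun i => P i x) = (fun i => P i y))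
    (f f₂ f₃ : (Fin n → ZMod p) → ℝ)
    (hdecomp : ∀ x, f x = condExp (fun x => fun i => P i x) f x + f₂ x + f₃ x) :
    l1Avg (fun x => condExp (fun x => fun i => P i x) f x -
        condExp (fun x => fun i => Q i x) f x) ≤
      l2Avg f₂ + (p : ℝ) ^ (d * C') * gowersNorm f₃ (d + 1) := by
  set BP := fun x i => P i x
  set BQ := fun x i => Q i x
  have hQf : condExp BQ f = condExp BP f + condExp BQ f₂ + condExp BQ f₃ := by
    have hsplit : f = condExp BP f + f₂ + f₃ := funext hdecomp
    conv_lhs => rw [hsplit]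
    rw [condExp_add, condExp_add, condExp_condExp_of_refines BP hrefine]
  have hdiff : (fun x => condExp BP f x - condExp BQ f x) = -(condExp BQ f₂ + condExp BQ f₃) := by
    ext x
    simp only [hQf, Pi.add_apply, Pi.neg_apply]
    ring
  have hf₃ := l1Avg_condExp_le_of_nsmul_eq_zero (Fact.out : p.Prime).pos
    (ZModModule.char_nsmul_eq_zero p) hdegQ f₃
  rw [Fintype.card_fin] at hf₃
  rw [hdiff, l1Avg_neg]
  exact (l1Avg_add_le _ _).trans
    (add_le_add ((l1Avg_condExp_le BQ f₂).trans (l1Avg_le_l2Avg f₂)) hf₃)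

/-- Let `B` be a polynomial factor of degree `d`, complexity `C`, on
`F_p^n`, let `f : F_p^n → {0,1}` decompose as `f = E[f|B] + f₂ + f₃` with `f₂, f₃`
`[-1,1]`-valued, and let `B'` be a polynomial factor of degree `d`, complexity `C'`,
whose partition refines that of `B`. Then
`‖E[f|B] − E[f|B']‖₁ ≤ ‖f₂‖₂ + p^{dC'} ‖f₃‖_{U^{d+1}}`. -/
theorem condExp_refinement_bound {p n : ℕ} [Fact p.Prime] (d C C' : ℕ)
    (P : Fin C → (Fin n → ZMod p) → AddCircle (1 : ℝ))
    (Q : Fin C' → (Fin n → ZMod p) → AddCircle (1 : ℝ))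
    (hdegP : ∀ i, IsPolyDegLE (P i) d)
    (hdegQ : ∀ i, IsPolyDegLE (Q i) d)
    (hrefine : ∀ x y : Fin n → ZMod p,
      (fun i => Q i x) = (fun i => Q i y) → (fun i => P i x) = (fun i => P i y))
    (f f₂ f₃ : (Fin n → ZMod p) → ℝ)
    (hf : ∀ x, f x ∈ ({0, 1} : Set ℝ))
    (hf₂ : ∀ x, f₂ x ∈ Set.Icc (-1 : ℝ) 1)
    (hf₃ : ∀ x, f₃ x ∈ Set.Icc (-1 : ℝ) 1)
    (hdecomp : ∀ x, f x = condExp (fun x => fun i => P i x) f x + f₂ x + f₃ x) :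
    l1Avg (fun x => condExp (fun x => fun i => P i x) f x -
        condExp (fun x => fun i => Q i x) f x) ≤
      l2Avg f₂ + (p : ℝ) ^ (d * C') * gowersNorm f₃ (d + 1) :=
  condExp_refinement_bound_general d C C' P Q hdegQ hrefine f f₂ f₃ hdecomp
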